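/- (Leibniz formula for iterated commutators) In any associative ring $R$, for all $r,s,x_1,\ldots,x_k\in R$: $[rs,x_1,\ldots,x_k]_{k+1}=\sum [r,x_{i_1},\ldots,x_{i_t}]_{t+1}\cdot[s,x_{j_1},\ldots,x_{j_{k-t}}]_{k-t+1}$, where the sum runs over all ways to split the index set $\{1,\ldots,k\}$ into two complementary increasing subsequences $i_1<\cdots<i_t$ and $j_1<\cdots<j_{k-t}$ (empty subsequences allowed, with $[r,\varnothing]_1=r$). -/

import Mathlib

/-!
Expanding `[rs, x₁] = r [s, x₁] + [r, x₁] s` and using that `[·, x₂, …, x_k]` is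
additive, induction on `k` reduces the formula for `x₁, …, x_k` to the one for
`x₂, …, x_k`: the subsets of `{1, …, k}` that avoid `1` give the first summand
(`x₁` acts on `s`), those that contain `1` give the second (`x₁` acts on `r`).
-/

/-- `lprod r [x₁, …, xₘ]` is the left-normed commutator `[r, x₁, …, xₘ]_{m+1}`. -/
def lprod {R : Type*} [Ring R] (r : R) (l : List R) : R :=
  l.foldl (fun a x => a * x - x * a) r

/-- The `k`-th Lie centralizer of a subset `H` of `R`:
`Lcen k H = {r : R | [r, x₁, …, x_k]_{k+1} = 0 for all xᵢ ∈ H}`. -/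
def Lcen {R : Type*} [Ring R] (k : ℕ) (H : Set R) : Set R :=
  {r : R | ∀ x : Fin k → R, (∀ i, x i ∈ H) → lprod r (List.ofFn x) = 0}

theorem Finset.powerset_map {α β : Type*} (s : Finset α) (f : α ↪ β) :
    (s.map f).powerset = s.powerset.map (mapEmbedding f).toEmbedding := by
  ext T
  simp [subset_map_iff, eq_comm]

namespace Fin

variable {k : ℕ}

theorem zero_notMem_map_succEmb (t : Finset (Fin k)) : (0 : Fin (k + 1)) ∉ t.map (succEmb k) := by
  simp [succ_ne_zero]

theorem sum_finset_succ {M : Type*} [AddCommMonoid M] (g : Finset (Fin (k + 1)) → M) :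
    ∑ T, g T =
      ∑ t : Finset (Fin k), (g (t.map (succEmb k)) + g (insert 0 (t.map (succEmb k)))) := by
  have huniv : (Finset.univ : Finset (Fin (k + 1))) = insert 0 (Finset.univ.map (succEmb k)) := by
    rw [univ_succ, Finset.cons_eq_insert]; rfl
  rw [← Finset.powerset_univ, huniv, Finset.sum_powerset_insert (zero_notMem_map_succEmb _),
    Finset.powerset_map, Finset.sum_map, Finset.sum_map, ← Finset.sum_add_distrib,
    Finset.powerset_univ]
  simp only [RelEmbedding.coe_toEmbedding, Finset.mapEmbedding_apply]

theorem sort_map_succEmb (t : Finset (Fin k)) :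
    (t.map (succEmb k)).sort (· ≤ ·) = (t.sort (· ≤ ·)).map succ :=
  (Finset.map_sort _ _ _ _ fun _ _ _ _ => succ_le_succ_iff.symm).symm

theorem sort_insert_zero_map_succEmb (t : Finset (Fin k)) :
    (insert 0 (t.map (succEmb k))).sort (· ≤ ·) = 0 :: (t.sort (· ≤ ·)).map succ := by
  rw [Finset.sort_insert _ (fun b _ => zero_le b) (zero_notMem_map_succEmb t), sort_map_succEmb]

theorem compl_map_succEmb (t : Finset (Fin k)) :
    (t.map (succEmb k))ᶜ = insert 0 (tᶜ.map (succEmb k)) := by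
  ext i
  cases i using Fin.cases <;> simp [succ_ne_zero]

theorem compl_insert_zero_map_succEmb (t : Finset (Fin k)) :
    (insert 0 (t.map (succEmb k)))ᶜ = tᶜ.map (succEmb k) := by
  rw [← compl_compl (tᶜ.map (succEmb k)), compl_map_succEmb, compl_compl]

end Fin

section Ring

variable {R : Type*} [Ring R]

theorem lprod_cons (r a : R) (l : List R) : lprod r (a :: l) = lprod (r * a - a * r) l := rfl

theorem lprod_add (a b : R) (l : List R) : lprod (a + b) l = lprod a l + lprod b l := by
  induction l generalizing a b with
  | nil => rfl
  | cons x l ih =>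
    simp only [lprod_cons, ← ih]
    congr 1
    noncomm_ring

theorem lprod_mul_cons (r s a : R) (l : List R) :
    lprod (r * s) (a :: l) = lprod (r * (s * a - a * s)) l + lprod ((r * a - a * r) * s) l := by
  rw [lprod_cons, ← lprod_add]
  congr 1
  noncomm_ring

end Ring

/-- Leibniz formula for iterated commutators: `[rs, x₁, …, x_k]` equals the sum over
all splittings of `{1, …, k}` into complementary increasing subsequences of the
products `[r, x over first part] * [s, x over second part]`. -/
theorem lprod_mul {R : Type*} [Ring R] (r s : R) {k : ℕ} (x : Fin k → R) :
    lprod (r * s) (List.ofFn x) =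
      ∑ T : Finset (Fin k),
        lprod r ((T.sort (· ≤ ·)).map x) * lprod s ((Tᶜ.sort (· ≤ ·)).map x) := by
  induction k generalizing r s with
  | zero => simp [lprod, Finset.eq_empty_of_isEmpty]
  | succ k ih =>
    rw [List.ofFn_succ, lprod_mul_cons, ih, ih, Fin.sum_finset_succ, ← Finset.sum_add_distrib]
    refine Finset.sum_congr rfl fun t _ => ?_
    rw [Fin.compl_map_succEmb, Fin.compl_insert_zero_map_succEmb, Fin.sort_insert_zero_map_succEmb,
      Fin.sort_insert_zero_map_succEmb, Fin.sort_map_succEmb, Fin.sort_map_succEmb]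
    simp only [List.map_cons, List.map_map, lprod_cons, Function.comp_def]
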